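/- Let n be an odd positive integer, N a positive integer, A ∈ M_N(ℂ), and B₀, B₁, …, Bₙ ∈ M_N(ℂ). Then ∑_{σ ∈ S_{n+1}} sgn(σ) · Tr( B_{σ(0)} A B_{σ(1)} A ⋯ B_{σ(n)} A ) = 0. -/

import Mathlib

/-!
Precomposing `σ` with the cycle `finRotate (n + 1)` rotates the list of factors, which leaves
the trace unchanged, while it flips the sign of `σ` because an `(n + 1)`-cycle with `n` odd is an
odd permutation. Hence the alternating sum equals its own negative, so it vanishes.
-/

theorem List.ofFn_comp_finRotate {α : Type*} {n : ℕ} (f : Fin (n + 1) → α) :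
    List.ofFn (f ∘ finRotate (n + 1)) = (List.ofFn f).rotate 1 := by
  rw [List.ofFn_succ', List.ofFn_succ (f := f), List.rotate_cons_succ, List.rotate_zero,
    List.concat_eq_append]
  simp only [Function.comp_apply, finRotate_apply, Fin.coeSucc_eq_succ, Fin.last_add_one]

theorem Matrix.trace_prod_rotate {m R : Type*} [Fintype m] [DecidableEq m] [CommSemiring R]
    (l : List (Matrix m m R)) (k : ℕ) : trace (l.rotate k).prod = trace l.prod := by
  induction k with
  | zero => rw [List.rotate_zero]
  | succ k ih =>
    rw [← List.rotate_rotate, ← ih]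
    cases l.rotate k with
    | nil => rfl
    | cons a t => simp only [List.rotate_cons_succ, List.rotate_zero, List.prod_append,
        List.prod_cons, List.prod_nil, mul_one, trace_mul_comm a]

theorem Equiv.Perm.sum_sign_smul_eq_zero_of_mul_right_invariant
    {α M : Type*} [Fintype α] [DecidableEq α] [AddCommGroup M] [IsAddTorsionFree M]
    (τ : Perm α) (hτ : sign τ = -1) (F : Perm α → M) (hF : ∀ σ, F (σ * τ) = F σ) :
    ∑ σ, (sign σ : ℤ) • F σ = 0 := by
  rw [← self_eq_neg]
  calc ∑ σ, (sign σ : ℤ) • F σ = ∑ σ, (sign (σ * τ) : ℤ) • F (σ * τ) :=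
        (Fintype.sum_equiv (Equiv.mulRight τ) _ _ fun _ => rfl).symm
    _ = -∑ σ, (sign σ : ℤ) • F σ := by
        simp [hF, hτ, ← Finset.sum_neg_distrib]

theorem stmt_6_general (n N : ℕ) (hn : Odd n)
    (A : Matrix (Fin N) (Fin N) ℂ) (B : Fin (n + 1) → Matrix (Fin N) (Fin N) ℂ) :
    ∑ σ : Equiv.Perm (Fin (n + 1)),
      (Equiv.Perm.sign σ : ℤ) •
        Matrix.trace ((List.ofFn (fun i : Fin (n + 1) => B (σ i) * A)).prod) = 0 := by
  have hodd : Equiv.Perm.sign (finRotate (n + 1)) = -1 := by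
    rw [sign_finRotate, Nat.add_sub_cancel, hn.neg_one_pow]
  refine Equiv.Perm.sum_sign_smul_eq_zero_of_mul_right_invariant _ hodd _ fun σ => ?_
  calc Matrix.trace (List.ofFn ((fun i => B (σ i) * A) ∘ finRotate (n + 1))).prod
      = Matrix.trace ((List.ofFn fun i => B (σ i) * A).rotate 1).prod := by
        rw [List.ofFn_comp_finRotate]
    _ = Matrix.trace (List.ofFn fun i => B (σ i) * A).prod := Matrix.trace_prod_rotate _ 1

theorem stmt_6 (n N : ℕ) (hn : Odd n) (hn' : 0 < n) (hN : 0 < N)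
    (A : Matrix (Fin N) (Fin N) ℂ) (B : Fin (n + 1) → Matrix (Fin N) (Fin N) ℂ) :
    ∑ σ : Equiv.Perm (Fin (n + 1)),
      (Equiv.Perm.sign σ : ℤ) •
        Matrix.trace ((List.ofFn (fun i : Fin (n + 1) => B (σ i) * A)).prod) = 0 :=
  stmt_6_general n N hn A B
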